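/- Let α ∈ [0,1) and set β := 1/(1−α). There exist constants 0 < C_1 ≤ C_2, depending only on a, d and α, such that for every integer j ≥ 1, every rectangle R ∈ 𝒦_j, and every x ∈ R: C_1 |R| ≤ (|x|_{a,∞})^{να} ≤ C_2 |R|; moreover the same two-sided estimate (with possibly different constants depending only on a, d, α) holds with |x|_{a,∞} replaced by |x|_a and by ⟨x⟩. -/

import Mathlib

open MeasureTheory

noncomputable section

/-- Number of outer intervals on each side at level `j`: `⌈j^{a-1}⌉`. -/
def mOut (a : ℝ) (j : ℕ) : ℤ := ⌈(j : ℝ) ^ (a - 1)⌉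

/-- Number of inner intervals at level `j`: `⌈j^{a}⌉`. -/
def mIn (a : ℝ) (j : ℕ) : ℤ := ⌈(j : ℝ) ^ a⌉

/-- Total number of intervals in the partition `𝒜_j^i`. -/
def numIv (a : ℝ) (j : ℕ) : ℤ := mIn a j + 2 * mOut a j

/-- Common length of the outer intervals. -/
def lenO (a β : ℝ) (j : ℕ) : ℝ :=
  (((j : ℝ) + 1) ^ (a * β) - (j : ℝ) ^ (a * β)) / ((mOut a j : ℤ) : ℝ)

/-- Common length of the inner intervals. -/
def lenI (a β : ℝ) (j : ℕ) : ℝ :=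
  2 * (j : ℝ) ^ (a * β) / ((mIn a j : ℤ) : ℝ)

/-- The `k`-th knot (from the left, `k = 0, …, numIv`) of the partition `𝒜_j^i` of
`A_j^i = [−(j+1)^{aβ}, (j+1)^{aβ})`: the two components of `A_j^i ∖ B_j^i` are divided
into `⌈j^{a-1}⌉` equal intervals each, and `B_j^i = [−j^{aβ}, j^{aβ})` into `⌈j^{a}⌉`
equal intervals. -/
def knot (a β : ℝ) (j : ℕ) (k : ℤ) : ℝ :=
  if k ≤ mOut a j then -((j : ℝ) + 1) ^ (a * β) + (k : ℝ) * lenO a β j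
  else if k ≤ mOut a j + mIn a j then
    -(j : ℝ) ^ (a * β) + ((k - mOut a j : ℤ) : ℝ) * lenI a β j
  else (j : ℝ) ^ (a * β) + ((k - mOut a j - mIn a j : ℤ) : ℝ) * lenO a β j

/-- The `k`-th interval of the partition `𝒜_j^i`. -/
def ivl (a β : ℝ) (j : ℕ) (k : ℤ) : Set ℝ :=
  Set.Ico (knot a β j k) (knot a β j (k + 1))

/-- The partition `𝒜_j^i` (with `a = a_i`), as a family of subsets of `ℝ`. -/
def partA (a β : ℝ) (j : ℕ) : Set (Set ℝ) :=
  {I | ∃ k : ℤ, 0 ≤ k ∧ k < numIv a j ∧ I = ivl a β j k}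

/-- The index `k` corresponds to an inner interval. -/
def isInnerIdx (a : ℝ) (j : ℕ) (k : ℤ) : Prop :=
  mOut a j ≤ k ∧ k < mOut a j + mIn a j

/-- The family `ℬ_j^i` of inner intervals. -/
def partInner (a β : ℝ) (j : ℕ) : Set (Set ℝ) :=
  {I | ∃ k : ℤ, isInnerIdx a j k ∧ I = ivl a β j k}

/-- `𝒜_j`: rectangles `I_1 × ⋯ × I_d` with `I_i ∈ 𝒜_j^i`, encoded by their factors. -/
def rectA {d : ℕ} (a : Fin d → ℝ) (β : ℝ) (j : ℕ) : Set (Fin d → Set ℝ) :=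
  {R | ∀ i, R i ∈ partA (a i) β j}

/-- `ℬ_j`: rectangles all of whose factors are inner intervals. -/
def rectB {d : ℕ} (a : Fin d → ℝ) (β : ℝ) (j : ℕ) : Set (Fin d → Set ℝ) :=
  {R | ∀ i, R i ∈ partInner (a i) β j}

/-- `𝒦_j := 𝒜_j ∖ ℬ_j` for `j ≥ 1`. -/
def rectK {d : ℕ} (a : Fin d → ℝ) (β : ℝ) (j : ℕ) : Set (Fin d → Set ℝ) :=
  rectA a β j \ rectB a β j

/-- `𝒦_0 := {[−1,1)^d}`. -/
def rectK0 (d : ℕ) : Set (Fin d → Set ℝ) := {fun _ => Set.Ico (-1 : ℝ) 1}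

/-- `𝒦 := ⋃_{j ≥ 0} 𝒦_j`. -/
def rectKall {d : ℕ} (a : Fin d → ℝ) (β : ℝ) : Set (Fin d → Set ℝ) :=
  rectK0 d ∪ ⋃ (j : ℕ) (_ : 1 ≤ j), rectK a β j

/-- The volume `|R|` of a rectangle, the product of its side lengths. -/
def rVol {d : ℕ} (R : Fin d → Set ℝ) : ℝ := ∏ i, (volume (R i)).toReal

/-- The Euclidean norm on `ℝ^d`. -/
def euclNorm {d : ℕ} (x : Fin d → ℝ) : ℝ := Real.sqrt (∑ i, (x i) ^ 2)

/-- The anisotropic dilation `t^{-a} x`. -/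
def aDilNeg {d : ℕ} (a : Fin d → ℝ) (t : ℝ) (x : Fin d → ℝ) : Fin d → ℝ :=
  fun i => t ^ (-(a i)) * x i

/-- `nrm` is the anisotropic quasi-norm `|·|_a`. -/
def IsAnisoNorm {d : ℕ} (a : Fin d → ℝ) (nrm : (Fin d → ℝ) → ℝ) : Prop :=
  nrm 0 = 0 ∧ ∀ x : Fin d → ℝ, x ≠ 0 → 0 < nrm x ∧ euclNorm (aDilNeg a (nrm x) x) = 1

/-!
Every side of a rectangle of `𝒦_j` has length comparable to `j^{a_i(β-1)}`: an inner side is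
`2 j^{a_iβ} / ⌈j^{a_i}⌉`, an outer one is `((j+1)^{a_iβ} - j^{a_iβ}) / ⌈j^{a_i-1}⌉`, and the
numerator is comparable to `j^{a_iβ-1}` (Bernoulli's inequality). Hence `|R| ≍ j^{ν(β-1)}`,
and `ν(β-1) = β·να` because `β = 1/(1-α)`.

On the other side, every point of `R` has `|x_i| ≤ (j+1)^{a_iβ}`, and since `R ∉ ℬ_j` one of its
coordinates lies in an outer interval, where `|x_i| ≥ j^{a_iβ}`; so `|x|_{a,∞} ≍ j^β`. Finally
the defining equation `∑ (t^{-a_i} x_i)² = 1` of `t = |x|_a` gives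
`|x|_{a,∞} ≤ |x|_a ≤ √d |x|_{a,∞}`; likewise `⟨x⟩` is comparable to
`max(1, |x|_{a,∞})`, which is `|x|_{a,∞}` here since `j^β ≥ 1`.
-/

lemma rpow_sub_one_mul_self {x : ℝ} (hx : x ≠ 0) (y : ℝ) : x ^ (y - 1) * x = x ^ y := by
  rw [Real.rpow_sub_one hx, div_mul_cancel₀ _ hx]

lemma rpow_sub_one_le_add_one_rpow_sub_rpow {s t : ℝ} (hs : 1 ≤ s) (ht : 0 < t) :
    t ^ (s - 1) ≤ (t + 1) ^ s - t ^ s := by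
  have hmono : t ^ (s - 1) ≤ (t + 1) ^ (s - 1) :=
    Real.rpow_le_rpow ht.le (by linarith) (by linarith)
  rw [← rpow_sub_one_mul_self (by positivity : t + 1 ≠ 0) s, ← rpow_sub_one_mul_self ht.ne' s]
  nlinarith

/-- Bernoulli's inequality for the base `t / (t + 1) = 1 - 1 / (t + 1)`. -/
lemma add_one_rpow_sub_rpow_le {s t : ℝ} (hs : 1 ≤ s) (ht : 0 ≤ t) :
    (t + 1) ^ s - t ^ s ≤ s * (t + 1) ^ (s - 1) := by
  have ht₁ : 0 < t + 1 := by linarith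
  have hbern := one_add_mul_self_le_rpow_one_add
    (show -1 ≤ -1 / (t + 1) by rw [le_div_iff₀ ht₁]; linarith) hs
  rw [show 1 + -1 / (t + 1) = t / (t + 1) by field_simp; ring,
    Real.div_rpow ht ht₁.le, le_div_iff₀ (by positivity)] at hbern
  rw [← rpow_sub_one_mul_self ht₁.ne' s] at hbern ⊢
  have : (1 + s * (-1 / (t + 1))) * ((t + 1) ^ (s - 1) * (t + 1))
      = (t + 1) ^ (s - 1) * (t + 1) - s * (t + 1) ^ (s - 1) := by field_simp; ring
  linarith

section Partition

variable {a β : ℝ} {j : ℕ} {k : ℤ}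

lemma mOut_pos (hj : 1 ≤ j) : 0 < mOut a j :=
  Int.ceil_pos.2 (Real.rpow_pos_of_pos (by exact_mod_cast hj) _)

lemma mIn_pos (hj : 1 ≤ j) : 0 < mIn a j :=
  Int.ceil_pos.2 (Real.rpow_pos_of_pos (by exact_mod_cast hj) _)

lemma mOut_mul_lenO (hj : 1 ≤ j) :
    (mOut a j : ℝ) * lenO a β j = ((j : ℝ) + 1) ^ (a * β) - (j : ℝ) ^ (a * β) :=
  mul_div_cancel₀ _ (by exact_mod_cast (mOut_pos hj).ne')

lemma mIn_mul_lenI (hj : 1 ≤ j) : (mIn a j : ℝ) * lenI a β j = 2 * (j : ℝ) ^ (a * β) :=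
  mul_div_cancel₀ _ (by exact_mod_cast (mIn_pos hj).ne')

lemma lenO_pos (hj : 1 ≤ j) (hs : 0 < a * β) : 0 < lenO a β j :=
  div_pos (sub_pos.2 (Real.rpow_lt_rpow j.cast_nonneg (lt_add_one _) hs))
    (by exact_mod_cast mOut_pos hj)

lemma lenI_pos (hj : 1 ≤ j) : 0 < lenI a β j :=
  div_pos (mul_pos two_pos (Real.rpow_pos_of_pos (by exact_mod_cast hj) _))
    (by exact_mod_cast mIn_pos hj)

lemma knot_of_le_mOut (hk : k ≤ mOut a j) :
    knot a β j k = -((j : ℝ) + 1) ^ (a * β) + k * lenO a β j :=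
  if_pos hk

-- Adjacent affine pieces of `knot` agree at the junction index, so each formula also holds there.
lemma knot_of_mOut_le_of_le (hj : 1 ≤ j) (h₁ : mOut a j ≤ k) (h₂ : k ≤ mOut a j + mIn a j) :
    knot a β j k = -(j : ℝ) ^ (a * β) + ((k - mOut a j : ℤ) : ℝ) * lenI a β j := by
  unfold knot
  rcases h₁.eq_or_lt with rfl | h₁
  · rw [if_pos le_rfl, sub_self, Int.cast_zero, zero_mul, add_zero, mOut_mul_lenO hj]
    ring
  · rw [if_neg h₁.not_ge, if_pos h₂]

lemma knot_of_mOut_add_mIn_le (hj : 1 ≤ j) (hk : mOut a j + mIn a j ≤ k) :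
    knot a β j k = (j : ℝ) ^ (a * β) + ((k - mOut a j - mIn a j : ℤ) : ℝ) * lenO a β j := by
  rcases hk.eq_or_lt with rfl | hk
  · rw [knot_of_mOut_le_of_le hj (by linarith [mIn_pos (a := a) hj]) le_rfl]
    push_cast
    linear_combination mIn_mul_lenI (β := β) hj
  · unfold knot
    rw [if_neg (by linarith [mIn_pos (a := a) hj]), if_neg hk.not_ge]

lemma knot_succ_sub_of_isInnerIdx (hj : 1 ≤ j) (hk : isInnerIdx a j k) :
    knot a β j (k + 1) - knot a β j k = lenI a β j := by
  rw [knot_of_mOut_le_of_le hj (by linarith [hk.1]) (by linarith [hk.2]),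
    knot_of_mOut_le_of_le hj hk.1 hk.2.le]
  push_cast
  ring

lemma knot_succ_sub_of_not_isInnerIdx (hj : 1 ≤ j) (hk : ¬ isInnerIdx a j k) :
    knot a β j (k + 1) - knot a β j k = lenO a β j := by
  rcases lt_or_ge k (mOut a j) with hk' | hk'
  · rw [knot_of_le_mOut hk', knot_of_le_mOut hk'.le]
    push_cast
    ring
  · have hk' : mOut a j + mIn a j ≤ k := not_lt.1 fun h => hk ⟨hk', h⟩
    rw [knot_of_mOut_add_mIn_le hj hk', knot_of_mOut_add_mIn_le hj (by linarith)]
    push_cast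
    ring

lemma knot_strictMono (hj : 1 ≤ j) (hs : 0 < a * β) : StrictMono (knot a β j) := by
  refine strictMono_int_of_lt_succ fun k => sub_pos.1 ?_
  by_cases hk : isInnerIdx a j k
  · exact (knot_succ_sub_of_isInnerIdx hj hk).symm ▸ lenI_pos hj
  · exact (knot_succ_sub_of_not_isInnerIdx hj hk).symm ▸ lenO_pos hj hs

lemma knot_zero : knot a β j 0 = -((j : ℝ) + 1) ^ (a * β) := by
  rw [knot_of_le_mOut (Int.ceil_nonneg (by positivity))]
  simp

lemma knot_mOut (hj : 1 ≤ j) : knot a β j (mOut a j) = -(j : ℝ) ^ (a * β) := by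
  rw [knot_of_mOut_le_of_le hj le_rfl (by linarith [mIn_pos (a := a) hj])]
  simp

lemma knot_mOut_add_mIn (hj : 1 ≤ j) :
    knot a β j (mOut a j + mIn a j) = (j : ℝ) ^ (a * β) := by
  rw [knot_of_mOut_add_mIn_le hj le_rfl]
  simp

lemma knot_numIv (hj : 1 ≤ j) : knot a β j (numIv a j) = ((j : ℝ) + 1) ^ (a * β) := by
  rw [numIv, knot_of_mOut_add_mIn_le hj (by linarith [mOut_pos (a := a) hj])]
  push_cast
  linear_combination mOut_mul_lenO (β := β) hj

lemma abs_le_of_mem_ivl (hj : 1 ≤ j) (hs : 0 < a * β) (hk₀ : 0 ≤ k) (hk : k < numIv a j)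
    {x : ℝ} (hx : x ∈ ivl a β j k) : |x| ≤ ((j : ℝ) + 1) ^ (a * β) := by
  have hmono := (knot_strictMono (a := a) (β := β) hj hs).monotone
  have h₀ := hmono hk₀
  have h₁ := hmono (show k + 1 ≤ numIv a j by omega)
  rw [knot_zero] at h₀
  rw [knot_numIv hj] at h₁
  exact abs_le.2 ⟨by linarith [hx.1], by linarith [hx.2]⟩

lemma le_abs_of_mem_ivl (hj : 1 ≤ j) (hs : 0 < a * β) (hk : ¬ isInnerIdx a j k)
    {x : ℝ} (hx : x ∈ ivl a β j k) : (j : ℝ) ^ (a * β) ≤ |x| := by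
  have hmono := (knot_strictMono (a := a) (β := β) hj hs).monotone
  rcases lt_or_ge k (mOut a j) with hk' | hk'
  · have h := hmono (show k + 1 ≤ mOut a j by omega)
    rw [knot_mOut hj] at h
    linarith [hx.2, neg_abs_le x]
  · have h := hmono (not_lt.1 fun h => hk ⟨hk', h⟩)
    rw [knot_mOut_add_mIn hj] at h
    linarith [hx.1, le_abs_self x]

lemma volume_ivl_toReal (hj : 1 ≤ j) (hs : 0 < a * β) :
    (volume (ivl a β j k)).toReal = knot a β j (k + 1) - knot a β j k := by
  rw [ivl, Real.volume_Ico, ENNReal.toReal_ofReal]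
  exact sub_nonneg.2 ((knot_strictMono hj hs).monotone (by omega))

end Partition

section SideLengths

variable {a β : ℝ} {j : ℕ}

lemma rpow_eq_rpow_mul_sub_one_mul (hj : 1 ≤ j) (c : ℝ) :
    (j : ℝ) ^ (a * β - c) = (j : ℝ) ^ (a * (β - 1)) * (j : ℝ) ^ (a - c) := by
  rw [← Real.rpow_add (by exact_mod_cast hj)]
  ring_nf

lemma two_inv_le_rpow (hj : 1 ≤ j) {e : ℝ} (he : 0 ≤ e) : (2 : ℝ)⁻¹ ≤ (j : ℝ) ^ e := by
  linarith [Real.one_le_rpow (show (1 : ℝ) ≤ j by exact_mod_cast hj) he]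

lemma le_lenI (ha : 1 ≤ a) (hj : 1 ≤ j) : (j : ℝ) ^ (a * (β - 1)) ≤ lenI a β j := by
  have hm : (mIn a j : ℝ) ≤ 2 * (j : ℝ) ^ a :=
    Int.ceil_le_two_mul (two_inv_le_rpow hj (by linarith))
  have h := rpow_eq_rpow_mul_sub_one_mul (a := a) (β := β) hj 0
  simp only [sub_zero] at h
  rw [lenI, le_div_iff₀ (by exact_mod_cast mIn_pos hj), h]
  have : (0 : ℝ) ≤ (j : ℝ) ^ (a * (β - 1)) := by positivity
  nlinarith

lemma lenI_le (hj : 1 ≤ j) : lenI a β j ≤ 2 * (j : ℝ) ^ (a * (β - 1)) := by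
  have hm : (j : ℝ) ^ a ≤ (mIn a j : ℝ) := Int.le_ceil _
  have h := rpow_eq_rpow_mul_sub_one_mul (a := a) (β := β) hj 0
  simp only [sub_zero] at h
  rw [lenI, div_le_iff₀ (by exact_mod_cast mIn_pos hj), h]
  have : (0 : ℝ) ≤ (j : ℝ) ^ (a * (β - 1)) := by positivity
  nlinarith

lemma le_lenO (ha : 1 ≤ a) (hβ : 1 ≤ β) (hj : 1 ≤ j) :
    (j : ℝ) ^ (a * (β - 1)) / 2 ≤ lenO a β j := by
  have hm : (mOut a j : ℝ) ≤ 2 * (j : ℝ) ^ (a - 1) :=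
    Int.ceil_le_two_mul (two_inv_le_rpow hj (by linarith))
  have hincr := rpow_sub_one_le_add_one_rpow_sub_rpow (s := a * β) (t := j) (by nlinarith)
    (by exact_mod_cast hj)
  rw [rpow_eq_rpow_mul_sub_one_mul hj] at hincr
  rw [lenO, le_div_iff₀ (by exact_mod_cast mOut_pos hj)]
  have : (0 : ℝ) ≤ (j : ℝ) ^ (a * (β - 1)) := by positivity
  nlinarith

lemma lenO_le (ha : 1 ≤ a) (hβ : 1 ≤ β) (hj : 1 ≤ j) :
    lenO a β j ≤ a * β * 2 ^ (a * β) * (j : ℝ) ^ (a * (β - 1)) := by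
  have hj₁ : (1 : ℝ) ≤ j := by exact_mod_cast hj
  have hs : 1 ≤ a * β := by nlinarith
  have hm : (j : ℝ) ^ (a - 1) ≤ (mOut a j : ℝ) := Int.le_ceil _
  have hincr : ((j : ℝ) + 1) ^ (a * β) - (j : ℝ) ^ (a * β)
      ≤ a * β * 2 ^ (a * β) * (j : ℝ) ^ (a * β - 1) :=
    calc ((j : ℝ) + 1) ^ (a * β) - (j : ℝ) ^ (a * β) ≤ a * β * ((j : ℝ) + 1) ^ (a * β - 1) :=
          add_one_rpow_sub_rpow_le hs (by positivity)
      _ ≤ a * β * (2 * (j : ℝ)) ^ (a * β - 1) := by gcongr; linarith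
      _ = a * β * 2 ^ (a * β - 1) * (j : ℝ) ^ (a * β - 1) := by
          rw [Real.mul_rpow zero_le_two (by positivity)]; ring
      _ ≤ a * β * 2 ^ (a * β) * (j : ℝ) ^ (a * β - 1) := by
          gcongr
          · exact one_le_two
          · linarith
  rw [rpow_eq_rpow_mul_sub_one_mul hj] at hincr
  rw [lenO, div_le_iff₀ (by exact_mod_cast mOut_pos hj)]
  have : (0 : ℝ) ≤ a * β * 2 ^ (a * β) * (j : ℝ) ^ (a * (β - 1)) := by positivity
  nlinarith

end SideLengths

section Rectangles

variable {d : ℕ} {a : Fin d → ℝ} {β : ℝ} {j : ℕ}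

lemma volume_ivl_bounds {a : ℝ} (ha : 1 ≤ a) (hβ : 1 ≤ β) (hj : 1 ≤ j) (k : ℤ) :
    (j : ℝ) ^ (a * (β - 1)) / 2 ≤ (volume (ivl a β j k)).toReal ∧
      (volume (ivl a β j k)).toReal ≤ a * β * 2 ^ (a * β) * (j : ℝ) ^ (a * (β - 1)) := by
  have hs : 1 ≤ a * β := by nlinarith
  rw [volume_ivl_toReal hj (by linarith)]
  by_cases hk : isInnerIdx a j k
  · rw [knot_succ_sub_of_isInnerIdx hj hk]
    have h₂ : (2 : ℝ) ≤ 2 ^ (a * β) := by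
      simpa using Real.rpow_le_rpow_of_exponent_le one_le_two hs
    have hJ : (0 : ℝ) ≤ (j : ℝ) ^ (a * (β - 1)) := by positivity
    have hC : (2 : ℝ) ≤ a * β * 2 ^ (a * β) := by nlinarith
    exact ⟨by linarith [le_lenI (β := β) ha hj],
      (lenI_le hj).trans (mul_le_mul_of_nonneg_right hC hJ)⟩
  · rw [knot_succ_sub_of_not_isInnerIdx hj hk]
    exact ⟨le_lenO ha hβ hj, lenO_le ha hβ hj⟩

lemma rVol_bounds (ha : ∀ i, 1 ≤ a i) (hβ : 1 ≤ β) (hj : 1 ≤ j) {R : Fin d → Set ℝ}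
    (hR : R ∈ rectA a β j) :
    (j : ℝ) ^ ((∑ i, a i) * (β - 1)) / 2 ^ d ≤ rVol R ∧
      rVol R ≤ (∏ i, a i * β * 2 ^ (a i * β)) * (j : ℝ) ^ ((∑ i, a i) * (β - 1)) := by
  choose k _ _ hk using fun i => hR i
  have hvol i := volume_ivl_bounds (ha i) hβ hj (k i)
  have hpow : (j : ℝ) ^ ((∑ i, a i) * (β - 1)) = ∏ i, (j : ℝ) ^ (a i * (β - 1)) := by
    rw [Finset.sum_mul, Real.rpow_sum_of_pos (by exact_mod_cast hj)]
  simp only [rVol, hk, hpow]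
  constructor
  · have h2 : (2 : ℝ) ^ d = ∏ _i : Fin d, 2 := by simp
    rw [h2, ← Finset.prod_div_distrib]
    exact Finset.prod_le_prod (fun i _ => by positivity) fun i _ => (hvol i).1
  · rw [← Finset.prod_mul_distrib]
    exact Finset.prod_le_prod (fun i _ => ENNReal.toReal_nonneg) fun i _ => (hvol i).2

lemma rpow_abs_le_of_mem_rectA (ha : ∀ i, 1 ≤ a i) (hβ : 1 ≤ β) (hj : 1 ≤ j)
    {R : Fin d → Set ℝ} (hR : R ∈ rectA a β j) {x : Fin d → ℝ} (hx : ∀ i, x i ∈ R i) (i : Fin d) :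
    |x i| ^ (1 / a i) ≤ 2 ^ β * (j : ℝ) ^ β := by
  obtain ⟨k, hk₀, hk, hRi⟩ := hR i
  have hj₁ : (1 : ℝ) ≤ j := by exact_mod_cast hj
  have habs := abs_le_of_mem_ivl hj (by nlinarith [ha i]) hk₀ hk (hRi ▸ hx i)
  rw [mul_comm, Real.rpow_mul (by positivity)] at habs
  calc |x i| ^ (1 / a i) ≤ ((j : ℝ) + 1) ^ β := by
        rw [one_div]
        exact (Real.rpow_inv_le_iff_of_pos (abs_nonneg _) (by positivity)
          (by linarith [ha i])).2 habs
    _ ≤ (2 * (j : ℝ)) ^ β := by gcongr; linarith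
    _ = 2 ^ β * (j : ℝ) ^ β := Real.mul_rpow zero_le_two (by positivity)

lemma exists_rpow_le_rpow_abs_of_mem_rectK (ha : ∀ i, 1 ≤ a i) (hβ : 1 ≤ β) (hj : 1 ≤ j)
    {R : Fin d → Set ℝ} (hR : R ∈ rectK a β j) {x : Fin d → ℝ} (hx : ∀ i, x i ∈ R i) :
    ∃ i, (j : ℝ) ^ β ≤ |x i| ^ (1 / a i) := by
  obtain ⟨hA, hB⟩ := hR
  choose k _ _ hk using fun i => hA i
  obtain ⟨i, hi⟩ : ∃ i, ¬ isInnerIdx (a i) j (k i) := by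
    by_contra! h
    exact hB fun i => ⟨k i, h i, hk i⟩
  have habs := le_abs_of_mem_ivl hj (by nlinarith [ha i]) hi (hk i ▸ hx i)
  rw [mul_comm, Real.rpow_mul (by positivity)] at habs
  refine ⟨i, ?_⟩
  rw [one_div]
  exact (Real.le_rpow_inv_iff_of_pos (by positivity) (abs_nonneg _) (by linarith [ha i])).2 habs

end Rectangles

namespace IsAnisoNorm

variable {n : ℕ} {a : Fin n → ℝ} {N : (Fin n → ℝ) → ℝ}

lemma nonneg (h : IsAnisoNorm a N) (x : Fin n → ℝ) : 0 ≤ N x := by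
  rcases eq_or_ne x 0 with rfl | hx
  · exact h.1.ge
  · exact (h.2 x hx).1.le

lemma sum_sq_eq_one (h : IsAnisoNorm a N) {x : Fin n → ℝ} (hx : x ≠ 0) :
    ∑ i, (x i / N x ^ a i) ^ 2 = 1 := by
  have := (h.2 x hx).2
  rw [euclNorm, Real.sqrt_eq_one] at this
  simpa [aDilNeg, Real.rpow_neg (h.nonneg x), div_eq_inv_mul] using this

lemma abs_le_rpow (h : IsAnisoNorm a N) (x : Fin n → ℝ) (i : Fin n) : |x i| ≤ N x ^ a i := by
  rcases eq_or_ne x 0 with rfl | hx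
  · simpa using Real.rpow_nonneg (h.nonneg 0) (a i)
  have hpos : 0 < N x ^ a i := Real.rpow_pos_of_pos (h.2 x hx).1 _
  have hle : (x i / N x ^ a i) ^ 2 ≤ 1 :=
    h.sum_sq_eq_one hx ▸ Finset.single_le_sum (fun i _ => sq_nonneg (x i / N x ^ a i))
      (Finset.mem_univ i)
  rwa [sq_le_one_iff_abs_le_one, abs_div, abs_of_pos hpos, div_le_one hpos] at hle

lemma rpow_abs_le (h : IsAnisoNorm a N) {i : Fin n} (ha : 0 < a i) (x : Fin n → ℝ) :
    |x i| ^ (1 / a i) ≤ N x := by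
  rw [one_div]
  exact (Real.rpow_inv_le_iff_of_pos (abs_nonneg _) (h.nonneg x) ha).2 (h.abs_le_rpow x i)

lemma exists_rpow_le_sqrt_mul_abs (h : IsAnisoNorm a N) {x : Fin n → ℝ} (hx : x ≠ 0) :
    ∃ i, N x ^ a i ≤ √n * |x i| := by
  obtain ⟨i₀, -⟩ := Function.ne_iff.1 hx
  have hn : (0 : ℝ) < n := by exact_mod_cast i₀.pos
  obtain ⟨i, -, hi⟩ := Finset.exists_le_of_sum_le ⟨i₀, Finset.mem_univ _⟩
    (show ∑ _i : Fin n, 1 / (n : ℝ) ≤ ∑ i, (x i / N x ^ a i) ^ 2 by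
      rw [h.sum_sq_eq_one hx]
      simp [hn.ne'])
  have hpos : 0 < N x ^ a i := Real.rpow_pos_of_pos (h.2 x hx).1 _
  rw [div_pow, div_le_div_iff₀ hn (by positivity), one_mul] at hi
  refine ⟨i, ?_⟩
  rw [← Real.sqrt_sq_eq_abs, ← Real.sqrt_mul hn.le]
  exact Real.le_sqrt_of_sq_le (by linarith)

lemma le_sqrt_mul_of_rpow_abs_le (h : IsAnisoNorm a N) (ha : ∀ i, 1 ≤ a i) {x : Fin n → ℝ}
    {U : ℝ} (hU₀ : 0 ≤ U) (hU : ∀ i, |x i| ^ (1 / a i) ≤ U) : N x ≤ √n * U := by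
  rcases eq_or_ne x 0 with rfl | hx
  · rw [h.1]; positivity
  obtain ⟨i, hi⟩ := h.exists_rpow_le_sqrt_mul_abs hx
  have ha₀ : 0 < a i := by linarith [ha i]
  have hsqrt : 1 ≤ √n := Real.one_le_sqrt.2 (by exact_mod_cast i.pos)
  calc N x ≤ (√n * |x i|) ^ (1 / a i) := by
        rw [one_div]
        exact (Real.le_rpow_inv_iff_of_pos (h.nonneg x) (by positivity) ha₀).2 hi
    _ = √n ^ (1 / a i) * |x i| ^ (1 / a i) := Real.mul_rpow (by positivity) (abs_nonneg _)
    _ ≤ √n * U := by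
        gcongr
        · exact Real.rpow_le_self_of_one_le hsqrt ((div_le_one ha₀).2 (ha i))
        · exact hU i

end IsAnisoNorm

lemma exists_two_sided_bound {d : ℕ} {a : Fin d → ℝ} (ha : ∀ i, 1 ≤ a i) {α : ℝ} (hα0 : 0 ≤ α)
    (hα1 : α < 1) (N : (Fin d → ℝ) → ℝ) {c : ℝ} (hc : 1 ≤ c)
    (hN : ∀ j : ℕ, 1 ≤ j → ∀ R ∈ rectK a (1 / (1 - α)) j, ∀ x : Fin d → ℝ, (∀ i, x i ∈ R i) →
      (j : ℝ) ^ (1 / (1 - α)) ≤ N x ∧ N x ≤ c * (j : ℝ) ^ (1 / (1 - α))) :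
    ∃ C₁ C₂ : ℝ, 0 < C₁ ∧ C₁ ≤ C₂ ∧ ∀ j : ℕ, 1 ≤ j → ∀ R ∈ rectK a (1 / (1 - α)) j,
      ∀ x : Fin d → ℝ, (∀ i, x i ∈ R i) →
        C₁ * rVol R ≤ N x ^ ((∑ i, a i) * α) ∧ N x ^ ((∑ i, a i) * α) ≤ C₂ * rVol R := by
  set β := 1 / (1 - α) with hβ_def
  have hβ : 1 ≤ β := by rw [hβ_def, le_div_iff₀ (by linarith)]; linarith
  -- `β - 1 = βα` is what turns the exponent `ν(β - 1)` of `|R|` into `β · να`.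
  have hβα : β - 1 = β * α := by
    rw [hβ_def]
    field_simp [(by linarith : (0 : ℝ) < 1 - α).ne']
    ring
  set q := (∑ i, a i) * α with hq_def
  have hq : 0 ≤ q := mul_nonneg (Finset.sum_nonneg fun i _ => by linarith [ha i]) hα0
  set K := ∏ i, a i * β * 2 ^ (a i * β)
  have hK : 1 ≤ K := Finset.one_le_prod fun i _ =>
    one_le_mul_of_one_le_of_one_le (by nlinarith [ha i])
      (Real.one_le_rpow one_le_two (by nlinarith [ha i]))
  have hcq : 1 ≤ c ^ q * 2 ^ d := one_le_mul_of_one_le_of_one_le (Real.one_le_rpow hc hq)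
    (one_le_pow₀ one_le_two)
  refine ⟨1 / K, c ^ q * 2 ^ d, by positivity, (div_le_one₀ (by positivity)).2 hK |>.trans hcq, ?_⟩
  intro j hj R hR x hx
  obtain ⟨hV₁, hV₂⟩ := rVol_bounds ha hβ hj hR.1
  obtain ⟨hN₁, hN₂⟩ := hN j hj R hR x hx
  have hP : (j : ℝ) ^ ((∑ i, a i) * (β - 1)) = ((j : ℝ) ^ β) ^ q := by
    rw [← Real.rpow_mul (by positivity), hβα, hq_def]
    ring_nf
  rw [hP] at hV₁ hV₂
  have hNq₁ : ((j : ℝ) ^ β) ^ q ≤ N x ^ q := Real.rpow_le_rpow (by positivity) hN₁ hq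
  have hNq₂ : N x ^ q ≤ c ^ q * ((j : ℝ) ^ β) ^ q := by
    rw [← Real.mul_rpow (by positivity) (by positivity)]
    exact Real.rpow_le_rpow (by linarith [Real.rpow_nonneg (Nat.cast_nonneg j) β]) hN₂ hq
  constructor
  · calc 1 / K * rVol R ≤ 1 / K * (K * ((j : ℝ) ^ β) ^ q) := by gcongr
      _ = ((j : ℝ) ^ β) ^ q := by field_simp
      _ ≤ N x ^ q := hNq₁
  · calc N x ^ q ≤ c ^ q * ((j : ℝ) ^ β) ^ q := hNq₂
      _ = c ^ q * 2 ^ d * (((j : ℝ) ^ β) ^ q / 2 ^ d) := by field_simp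
      _ ≤ c ^ q * 2 ^ d * rVol R := by gcongr

theorem stmt8_general (d : ℕ) (a : Fin d → ℝ) (ha : ∀ i, 1 ≤ a i)
    (α : ℝ) (hα0 : 0 ≤ α) (hα1 : α < 1)
    (nrm : (Fin d → ℝ) → ℝ) (hnrm : IsAnisoNorm a nrm)
    (nrmE : (Fin (d + 1) → ℝ) → ℝ) (hnrmE : IsAnisoNorm (Fin.cons 1 a) nrmE) :
    (∃ C₁ C₂ : ℝ, 0 < C₁ ∧ C₁ ≤ C₂ ∧ ∀ j : ℕ, 1 ≤ j → ∀ R ∈ rectK a (1 / (1 - α)) j,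
      ∀ x : Fin d → ℝ, (∀ i, x i ∈ R i) →
        C₁ * rVol R ≤ (⨆ i : Fin d, |x i| ^ (1 / a i)) ^ ((∑ i, a i) * α) ∧
          (⨆ i : Fin d, |x i| ^ (1 / a i)) ^ ((∑ i, a i) * α) ≤ C₂ * rVol R) ∧
    (∃ C₁ C₂ : ℝ, 0 < C₁ ∧ C₁ ≤ C₂ ∧ ∀ j : ℕ, 1 ≤ j → ∀ R ∈ rectK a (1 / (1 - α)) j,
      ∀ x : Fin d → ℝ, (∀ i, x i ∈ R i) →
        C₁ * rVol R ≤ nrm x ^ ((∑ i, a i) * α) ∧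
          nrm x ^ ((∑ i, a i) * α) ≤ C₂ * rVol R) ∧
    (∃ C₁ C₂ : ℝ, 0 < C₁ ∧ C₁ ≤ C₂ ∧ ∀ j : ℕ, 1 ≤ j → ∀ R ∈ rectK a (1 / (1 - α)) j,
      ∀ x : Fin d → ℝ, (∀ i, x i ∈ R i) →
        C₁ * rVol R ≤ nrmE (Fin.cons 1 x) ^ ((∑ i, a i) * α) ∧
          nrmE (Fin.cons 1 x) ^ ((∑ i, a i) * α) ≤ C₂ * rVol R) := by
  set β := 1 / (1 - α) with hβ_def
  have hβ : 1 ≤ β := by rw [hβ_def, le_div_iff₀ (by linarith)]; linarith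
  have h2β : 1 ≤ (2 : ℝ) ^ β := Real.one_le_rpow one_le_two (by linarith)
  have hc : 1 ≤ √((d + 1 : ℕ) : ℝ) * 2 ^ β :=
    one_le_mul_of_one_le_of_one_le (Real.one_le_sqrt.2 (by simp)) h2β
  refine ⟨exists_two_sided_bound ha hα0 hα1 _ h2β ?_,
    exists_two_sided_bound ha hα0 hα1 nrm hc ?_,
    exists_two_sided_bound ha hα0 hα1 (fun x => nrmE (Fin.cons 1 x)) hc ?_⟩ <;>
  intro j hj R hR x hx <;>
  obtain ⟨i, hi⟩ := exists_rpow_le_rpow_abs_of_mem_rectK ha hβ hj hR hx <;>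
  have hU := rpow_abs_le_of_mem_rectA ha hβ hj hR.1 hx
  · have : Nonempty (Fin d) := ⟨i⟩
    exact ⟨le_ciSup_of_le (Set.finite_range _).bddAbove i hi, ciSup_le hU⟩
  · refine ⟨hi.trans (hnrm.rpow_abs_le (by linarith [ha i]) x), ?_⟩
    refine (hnrm.le_sqrt_mul_of_rpow_abs_le ha (by positivity) hU).trans ?_
    rw [mul_assoc]
    gcongr
    simp
  · have ha' : ∀ i, 1 ≤ (Fin.cons 1 a : Fin (d + 1) → ℝ) i := Fin.cases le_rfl ha
    have hU₁ : 1 ≤ 2 ^ β * (j : ℝ) ^ β :=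
      one_le_mul_of_one_le_of_one_le h2β (Real.one_le_rpow (by exact_mod_cast hj) (by linarith))
    refine ⟨hi.trans ?_, ?_⟩
    · simpa using hnrmE.rpow_abs_le (i := i.succ) (one_pos.trans_le (ha' _)) (Fin.cons 1 x)
    · refine (hnrmE.le_sqrt_mul_of_rpow_abs_le ha' (by positivity) (Fin.cases ?_ hU)).trans ?_
      · exact (mul_assoc _ _ _).ge
      · simpa using hU₁

/-- Lemma 3.1(d): with `β = 1/(1−α)`, for `x ∈ R ∈ 𝒦_j` (`j ≥ 1`) one has
`(|x|_{a,∞})^{να} ≍ |R|`, and likewise with `|x|_{a,∞}` replaced by `|x|_a` and by `⟨x⟩`. -/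
theorem stmt8 (d : ℕ) (hd : 1 ≤ d) (a : Fin d → ℝ) (ha : ∀ i, 1 ≤ a i)
    (α : ℝ) (hα0 : 0 ≤ α) (hα1 : α < 1)
    (nrm : (Fin d → ℝ) → ℝ) (hnrm : IsAnisoNorm a nrm)
    (nrmE : (Fin (d + 1) → ℝ) → ℝ) (hnrmE : IsAnisoNorm (Fin.cons 1 a) nrmE) :
    (∃ C₁ C₂ : ℝ, 0 < C₁ ∧ C₁ ≤ C₂ ∧ ∀ j : ℕ, 1 ≤ j → ∀ R ∈ rectK a (1 / (1 - α)) j,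
      ∀ x : Fin d → ℝ, (∀ i, x i ∈ R i) →
        C₁ * rVol R ≤ (⨆ i : Fin d, |x i| ^ (1 / a i)) ^ ((∑ i, a i) * α) ∧
          (⨆ i : Fin d, |x i| ^ (1 / a i)) ^ ((∑ i, a i) * α) ≤ C₂ * rVol R) ∧
    (∃ C₁ C₂ : ℝ, 0 < C₁ ∧ C₁ ≤ C₂ ∧ ∀ j : ℕ, 1 ≤ j → ∀ R ∈ rectK a (1 / (1 - α)) j,
      ∀ x : Fin d → ℝ, (∀ i, x i ∈ R i) →
        C₁ * rVol R ≤ nrm x ^ ((∑ i, a i) * α) ∧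
          nrm x ^ ((∑ i, a i) * α) ≤ C₂ * rVol R) ∧
    (∃ C₁ C₂ : ℝ, 0 < C₁ ∧ C₁ ≤ C₂ ∧ ∀ j : ℕ, 1 ≤ j → ∀ R ∈ rectK a (1 / (1 - α)) j,
      ∀ x : Fin d → ℝ, (∀ i, x i ∈ R i) →
        C₁ * rVol R ≤ nrmE (Fin.cons 1 x) ^ ((∑ i, a i) * α) ∧
          nrmE (Fin.cons 1 x) ^ ((∑ i, a i) * α) ≤ C₂ * rVol R) :=
  stmt8_general d a ha α hα0 hα1 nrm hnrm nrmE hnrmE
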